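/- arXiv:1706.00065 — 14 statements merged into one kernel-verified Lean document; each statement's English description precedes it below -/
import Mathlib

section
/- Let R be a commutative Noetherian ring, let 𝔞 ⊆ J ⊆ I be ideals of R. If J ∩ Iⁿ = J·Iⁿ⁻¹ for all n ≥ 1, then the images J̄ ⊆ Ī in R/𝔞 satisfy J̄ ∩ Īⁿ = J̄·Īⁿ⁻¹ for all n ≥ 1. -/
/-- Aluffi torsion-freeness passes to quotients by ideals contained in `J`. -/
theorem aluffi_torsion_free_quotient {R : Type*} [CommRing R] [IsNoetherianRing R]
    (a J I : Ideal R) (haJ : a ≤ J) (hJI : J ≤ I)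
    (h : ∀ n : ℕ, 1 ≤ n → J ⊓ I ^ n = J * I ^ (n - 1)) :
    ∀ n : ℕ, 1 ≤ n →
      (J.map (Ideal.Quotient.mk a)) ⊓ (I.map (Ideal.Quotient.mk a)) ^ n =
        (J.map (Ideal.Quotient.mk a)) * (I.map (Ideal.Quotient.mk a)) ^ (n - 1) := by
  intro n hn
  set f := Ideal.Quotient.mk a
  have hf : Function.Surjective f := Ideal.Quotient.mk_surjective
  have hker : RingHom.ker f = a := Ideal.mk_ker
  have hmap : ∀ X Y : Ideal R,
      Ideal.map f X ⊓ Ideal.map f Y = Ideal.map f ((X ⊔ a) ⊓ (Y ⊔ a)) := by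
    intro X Y
    rw [← Ideal.map_comap_of_surjective f hf (Ideal.map f X ⊓ Ideal.map f Y)]
    congr 1
    rw [Ideal.comap_inf, Ideal.comap_map_of_surjective f hf,
      Ideal.comap_map_of_surjective f hf, ← RingHom.ker_eq_comap_bot, hker]
  have key : Ideal.map f J ⊓ Ideal.map f (I ^ n) = Ideal.map f (J * I ^ (n - 1)) := by
    rw [hmap, sup_eq_left.mpr haJ]
    have hmod : J ⊓ (I ^ n ⊔ a) = (J ⊓ I ^ n) ⊔ a := by
      rw [inf_comm, inf_comm J (I ^ n), sup_comm (I ^ n) a,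
        sup_inf_assoc_of_le (I ^ n) haJ, sup_comm]
    rw [hmod, h n hn, Ideal.map_sup, Ideal.map_quotient_self, sup_bot_eq]
  rw [← Ideal.map_pow, ← Ideal.map_pow, key, Ideal.map_mul]
end

section
/- Let R → S be a flat homomorphism of commutative Noetherian rings and J ⊆ I ideals of R with J ∩ Iⁿ = J·Iⁿ⁻¹ for all n ≥ 1. Then the extended ideals satisfy JS ∩ (IS)ⁿ = (JS)·(IS)ⁿ⁻¹ for all n ≥ 1. -/
/-!
Flat base change preserves finite intersections of ideals, because `R ⧸ (J ⊓ K)` embeds into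
`R ⧸ J × R ⧸ K` and `(R ⧸ I) ⊗ M ≅ M ⧸ I • M`. Hence `JS ∩ (IS)ⁿ = (J ∩ Iⁿ)S = (J Iⁿ⁻¹)S`,
which is `JS · (IS)ⁿ⁻¹`.
-/

open TensorProduct

section

variable {R M : Type*} [CommRing R] [AddCommGroup M] [Module R M]

theorem Submodule.injective_factor_prod_factor (J K : Submodule R M) :
    Function.Injective ((factor inf_le_left : M ⧸ (J ⊓ K) →ₗ[R] M ⧸ J).prod
      (factor inf_le_right : M ⧸ (J ⊓ K) →ₗ[R] M ⧸ K)) := by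
  rw [← LinearMap.ker_eq_bot, eq_bot_iff]
  intro y hy
  obtain ⟨x, rfl⟩ := mkQ_surjective _ y
  simp_all [Quotient.mk_eq_zero]

theorem Submodule.mem_smul_top_iff_one_tmul_eq_zero (I : Ideal R) (x : M) :
    x ∈ I • (⊤ : Submodule R M) ↔ (1 : R ⧸ I) ⊗ₜ[R] x = 0 := by
  rw [← quotTensorEquivQuotSMul_symm_mk, LinearEquiv.map_eq_zero_iff, Quotient.mk_eq_zero]

theorem Module.Flat.smul_top_inf_smul_top [Module.Flat R M] (J K : Ideal R) :
    (J • ⊤ : Submodule R M) ⊓ K • ⊤ = (J ⊓ K) • ⊤ := by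
  refine le_antisymm (fun x hx ↦ ?_) (le_inf (Submodule.smul_mono_left inf_le_left)
    (Submodule.smul_mono_left inf_le_right))
  obtain ⟨hJ, hK⟩ := Submodule.mem_inf.mp hx
  simp only [Submodule.mem_smul_top_iff_one_tmul_eq_zero] at hJ hK ⊢
  have hinj := (TensorProduct.prodLeft R R _ _ M).injective.comp
    (Module.Flat.rTensor_preserves_injective_linearMap _
      (Submodule.injective_factor_prod_factor J K))
  refine hinj.eq_iff' (map_zero _) |>.mp ?_
  simp [hJ, hK]

theorem Ideal.map_inf_of_flat {S : Type*} [CommRing S] [Algebra R S] [Module.Flat R S]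
    (J K : Ideal R) :
    (J ⊓ K).map (algebraMap R S) = J.map (algebraMap R S) ⊓ K.map (algebraMap R S) := by
  apply Submodule.restrictScalars_injective R
  rw [← Ideal.smul_top_eq_map, ← Module.Flat.smul_top_inf_smul_top, Ideal.smul_top_eq_map,
    Ideal.smul_top_eq_map]
  rfl

end

theorem aluffi_torsion_free_flat_extension_general {R S : Type*} [CommRing R] [CommRing S]
    [Algebra R S] [Module.Flat R S]
    (J I : Ideal R)
    (h : ∀ n : ℕ, 1 ≤ n → J ⊓ I ^ n = J * I ^ (n - 1)) :
    ∀ n : ℕ, 1 ≤ n →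
      (J.map (algebraMap R S)) ⊓ (I.map (algebraMap R S)) ^ n =
        (J.map (algebraMap R S)) * (I.map (algebraMap R S)) ^ (n - 1) := by
  intro n hn
  rw [← Ideal.map_pow, ← Ideal.map_inf_of_flat, h n hn, Ideal.map_mul, Ideal.map_pow]

/-- Aluffi torsion-freeness extends along flat ring homomorphisms. -/
theorem aluffi_torsion_free_flat_extension {R S : Type*} [CommRing R] [CommRing S]
    [IsNoetherianRing R] [IsNoetherianRing S] [Algebra R S] [Module.Flat R S]
    (J I : Ideal R) (hJI : J ≤ I)
    (h : ∀ n : ℕ, 1 ≤ n → J ⊓ I ^ n = J * I ^ (n - 1)) :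
    ∀ n : ℕ, 1 ≤ n →
      (J.map (algebraMap R S)) ⊓ (I.map (algebraMap R S)) ^ n =
        (J.map (algebraMap R S)) * (I.map (algebraMap R S)) ^ (n - 1) :=
  aluffi_torsion_free_flat_extension_general J I h
end

section
/- Let R → S be a faithfully flat homomorphism of commutative Noetherian rings and J ⊆ I ideals of R. If JS ∩ (IS)ⁿ = (JS)·(IS)ⁿ⁻¹ for all n ≥ 1, then J ∩ Iⁿ = J·Iⁿ⁻¹ for all n ≥ 1. -/
theorem aluffi_torsion_free_faithfully_flat_descent_general {R S : Type*} [CommRing R] [CommRing S]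
    [Algebra R S] [Module.FaithfullyFlat R S]
    (J I : Ideal R)
    (h : ∀ n : ℕ, 1 ≤ n →
      (J.map (algebraMap R S)) ⊓ (I.map (algebraMap R S)) ^ n =
        (J.map (algebraMap R S)) * (I.map (algebraMap R S)) ^ (n - 1)) :
    ∀ n : ℕ, 1 ≤ n → J ⊓ I ^ n = J * I ^ (n - 1) := by
  intro n hn
  have contracted := congrArg (Ideal.comap (algebraMap R S)) (h n hn)
  simpa only [← Ideal.map_pow, ← Ideal.map_mul, Ideal.comap_inf,
    Ideal.comap_map_eq_self_of_faithfullyFlat] using contracted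

/-- Aluffi torsion-freeness descends along faithfully flat ring homomorphisms. -/
theorem aluffi_torsion_free_faithfully_flat_descent {R S : Type*} [CommRing R] [CommRing S]
    [IsNoetherianRing R] [IsNoetherianRing S] [Algebra R S] [Module.FaithfullyFlat R S]
    (J I : Ideal R) (hJI : J ≤ I)
    (h : ∀ n : ℕ, 1 ≤ n →
      (J.map (algebraMap R S)) ⊓ (I.map (algebraMap R S)) ^ n =
        (J.map (algebraMap R S)) * (I.map (algebraMap R S)) ^ (n - 1)) :
    ∀ n : ℕ, 1 ≤ n → J ⊓ I ^ n = J * I ^ (n - 1) :=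
  aluffi_torsion_free_faithfully_flat_descent_general J I h
end

section
/- Let J ⊆ I be ideals of a commutative Noetherian ring R. Then J ∩ Iⁿ = J·Iⁿ⁻¹ for all n ≥ 1 if and only if for every maximal ideal 𝔪 of R, the localized ideals satisfy J·R_𝔪 ∩ (I·R_𝔪)ⁿ = (J·R_𝔪)·(I·R_𝔪)ⁿ⁻¹ for all n ≥ 1. -/
/-- Localization commutes with intersections of ideals. -/
theorem map_inf_of_isLocalization {R S : Type*} [CommRing R] [CommRing S] [Algebra R S]
    (M : Submonoid R) [IsLocalization M S] (I J : Ideal R) :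
    (I ⊓ J).map (algebraMap R S) = I.map (algebraMap R S) ⊓ J.map (algebraMap R S) := by
  refine le_antisymm (le_inf (Ideal.map_mono inf_le_left) (Ideal.map_mono inf_le_right)) ?_
  rintro z ⟨hzI, hzJ⟩
  obtain ⟨⟨⟨a, ha⟩, s⟩, hs⟩ := (IsLocalization.mem_map_algebraMap_iff M S).mp hzI
  obtain ⟨⟨⟨b, hb⟩, t⟩, ht⟩ := (IsLocalization.mem_map_algebraMap_iff M S).mp hzJ
  -- a * t and b * s have the same image in S
  have key : algebraMap R S (a * t) = algebraMap R S (b * s) := by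
    rw [map_mul, map_mul, ← hs, ← ht]; ring
  obtain ⟨c, hc⟩ := (IsLocalization.eq_iff_exists M S).mp key
  refine (IsLocalization.mem_map_algebraMap_iff M S).mpr
    ⟨⟨⟨c * (a * t), ?_⟩, c * (s * t)⟩, ?_⟩
  · refine ⟨I.mul_mem_left _ (I.mul_mem_right _ ha), ?_⟩
    rw [hc]
    exact J.mul_mem_left _ (J.mul_mem_right _ hb)
  · have hs' : z * algebraMap R S s = algebraMap R S a := hs
    push_cast
    linear_combination (algebraMap R S c * algebraMap R S t) * hs'

/-- Aluffi torsion-freeness is a local property: it holds iff it holds after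
localization at every maximal ideal. -/
theorem aluffi_torsion_free_local {R : Type*} [CommRing R] [IsNoetherianRing R]
    (J I : Ideal R) (hJI : J ≤ I) :
    (∀ n : ℕ, 1 ≤ n → J ⊓ I ^ n = J * I ^ (n - 1)) ↔
      ∀ (m : Ideal R) (hm : m.IsMaximal),
        letI := hm.isPrime
        ∀ n : ℕ, 1 ≤ n →
          (J.map (algebraMap R (Localization.AtPrime m))) ⊓
              (I.map (algebraMap R (Localization.AtPrime m))) ^ n =
            (J.map (algebraMap R (Localization.AtPrime m))) *
              (I.map (algebraMap R (Localization.AtPrime m))) ^ (n - 1) := by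
  constructor
  · intro h m hm n hn
    letI := hm.isPrime
    have := congrArg (Ideal.map (algebraMap R (Localization.AtPrime m))) (h n hn)
    rwa [map_inf_of_isLocalization m.primeCompl, Ideal.map_pow, Ideal.map_mul,
      Ideal.map_pow] at this
  · intro h n hn
    refine Ideal.eq_of_localization_maximal fun P hP => ?_
    letI := hP.isPrime
    rw [map_inf_of_isLocalization P.primeCompl, Ideal.map_pow, Ideal.map_mul, Ideal.map_pow]
    exact h P hP n hn
end

section
/- Let J ⊆ I ⊆ R be ideals of a commutative ring. Then J ∩ Iⁿ = J·Iⁿ⁻¹ for all n ≥ 1 if and only if Iⁿ⁺¹ ∩ J·Iⁿ⁻¹ = J·Iⁿ for all n ≥ 1. -/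
/-!
Since `J ≤ I`, the ideal `Iⁿ⁺¹ ∩ J·Iⁿ⁻¹` lies between `J·Iⁿ` and `J ∩ Iⁿ⁺¹`, so the first
family of equalities gives the second. Conversely, once `J ∩ Iⁿ = J·Iⁿ⁻¹` is known, `J ∩ Iⁿ⁺¹` lies in
`Iⁿ⁺¹ ∩ (J ∩ Iⁿ) = Iⁿ⁺¹ ∩ J·Iⁿ⁻¹ = J·Iⁿ`, which drives an induction on `n` starting from `J ∩ I = J`.
-/

namespace Ideal

variable {R : Type*} [CommRing R] {I J : Ideal R}

theorem mul_pow_le_pow_succ (hJI : J ≤ I) (n : ℕ) : J * I ^ n ≤ I ^ (n + 1) :=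
  (mul_mono_left hJI).trans (pow_succ' I n).ge

theorem mul_pow_le_inf_pow_succ (hJI : J ≤ I) (n : ℕ) : J * I ^ n ≤ J ⊓ I ^ (n + 1) :=
  le_inf mul_le_left (mul_pow_le_pow_succ hJI n)

theorem mul_pow_le_pow_succ_inf_mul_pow_pred (hJI : J ≤ I) (n : ℕ) :
    J * I ^ n ≤ I ^ (n + 1) ⊓ J * I ^ (n - 1) :=
  le_inf (mul_pow_le_pow_succ hJI n) (mul_mono_right (pow_le_pow_right (n.sub_le 1)))

theorem pow_inf_mul_le_inf_pow (n m : ℕ) : I ^ n ⊓ J * I ^ m ≤ J ⊓ I ^ n :=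
  le_inf (inf_le_right.trans mul_le_left) inf_le_left

end Ideal

open Ideal in
/-- Valabrega–Valla criterion: `J ∩ Iⁿ = J·Iⁿ⁻¹` for all `n ≥ 1` iff
`Iⁿ⁺¹ ∩ J·Iⁿ⁻¹ = J·Iⁿ` for all `n ≥ 1`. -/
theorem aluffi_torsion_free_iff_valabrega_valla {R : Type*} [CommRing R]
    (J I : Ideal R) (hJI : J ≤ I) :
    (∀ n : ℕ, 1 ≤ n → J ⊓ I ^ n = J * I ^ (n - 1)) ↔
      (∀ n : ℕ, 1 ≤ n → I ^ (n + 1) ⊓ (J * I ^ (n - 1)) = J * I ^ n) := by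
  constructor
  · intro h n _
    have hsucc : J ⊓ I ^ (n + 1) = J * I ^ n := h (n + 1) (Nat.le_add_left 1 n)
    exact le_antisymm ((pow_inf_mul_le_inf_pow _ _).trans hsucc.le)
      (mul_pow_le_pow_succ_inf_mul_pow_pred hJI n)
  · intro h n hn
    induction n, hn using Nat.le_induction with
    | base => simpa using hJI
    | succ n hn ih =>
      have hle : J ⊓ I ^ (n + 1) ≤ I ^ (n + 1) ⊓ (J ⊓ I ^ n) :=
        le_inf inf_le_right (inf_le_inf_left J (pow_le_pow_right n.le_succ))
      rw [ih, h n hn] at hle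
      exact le_antisymm hle (mul_pow_le_inf_pow_succ hJI n)
end

section
/- Let J₁, J₂ ⊆ I be ideals in a commutative Noetherian ring R such that both J₁ ⊆ I and J₂ ⊆ I are Aluffi torsion-free. Then J₁ + J₂ ⊆ I is Aluffi torsion-free if and only if the image of J₁ in R/J₂ together with the image of I in R/J₂ form an Aluffi torsion-free pair. -/
/-!
Write `S = J₁ + J₂`. Pulling the quotient condition back along `R → R/J₂` turns it into
`(S ∩ Iⁿ) + J₂ = J₁Iⁿ⁻¹ + J₂`. Given `J₂ ∩ Iⁿ = J₂Iⁿ⁻¹`, the modular law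
`(J₁Iⁿ⁻¹ + J₂) ∩ Iⁿ = J₁Iⁿ⁻¹ + (J₂ ∩ Iⁿ)` shows this is equivalent to `S ∩ Iⁿ = SIⁿ⁻¹`.
-/

namespace Ideal

variable {R : Type*} [CommRing R]

def IsAluffiTorsionFree (J I : Ideal R) : Prop :=
  ∀ n : ℕ, 1 ≤ n → J ⊓ I ^ n = J * I ^ (n - 1)

theorem comap_mk_map_mk (J K : Ideal R) :
    (K.map (Quotient.mk J)).comap (Quotient.mk J) = K ⊔ J := by
  rw [comap_map_of_surjective' _ Quotient.mk_surjective, mk_ker]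

theorem map_mk_inf_eq_map_mk_mul_iff (J₁ J₂ P Q : Ideal R) :
    J₁.map (Quotient.mk J₂) ⊓ P.map (Quotient.mk J₂) =
        J₁.map (Quotient.mk J₂) * Q.map (Quotient.mk J₂) ↔
      (J₁ ⊔ J₂) ⊓ P ⊔ J₂ = J₁ * Q ⊔ J₂ := by
  rw [← (comap_injective_of_surjective _ Quotient.mk_surjective).eq_iff, comap_inf,
    ← Ideal.map_mul, comap_mk_map_mk, comap_mk_map_mk, comap_mk_map_mk,
    inf_sup_assoc_of_le P le_sup_right]

theorem sup_inf_eq_sup_mul_iff {J₁ J₂ P Q : Ideal R} (h₁ : J₁ * Q ≤ P)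
    (h₂ : J₂ ⊓ P = J₂ * Q) :
    (J₁ ⊔ J₂) ⊓ P = (J₁ ⊔ J₂) * Q ↔ (J₁ ⊔ J₂) ⊓ P ⊔ J₂ = J₁ * Q ⊔ J₂ := by
  constructor
  · intro h
    rw [h, sup_mul, sup_assoc, sup_eq_right.mpr (mul_le_left : J₂ * Q ≤ J₂)]
  · intro h
    apply le_antisymm
    · calc (J₁ ⊔ J₂) ⊓ P ≤ (J₁ * Q ⊔ J₂) ⊓ P := le_inf (le_sup_left.trans h.le) inf_le_right
        _ = J₁ * Q ⊔ J₂ ⊓ P := sup_inf_assoc_of_le J₂ h₁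
        _ = (J₁ ⊔ J₂) * Q := by rw [h₂, sup_mul]
    · refine le_inf mul_le_left ?_
      rw [sup_mul]
      exact sup_le h₁ (h₂ ▸ inf_le_right)

theorem isAluffiTorsionFree_sup_iff {J₁ J₂ I : Ideal R} (h₁ : J₁ ≤ I)
    (h₂ : IsAluffiTorsionFree J₂ I) :
    IsAluffiTorsionFree (J₁ ⊔ J₂) I ↔
      IsAluffiTorsionFree (J₁.map (Quotient.mk J₂)) (I.map (Quotient.mk J₂)) := by
  refine forall₂_congr fun n hn ↦ ?_
  have hJ₁ : J₁ * I ^ (n - 1) ≤ I ^ n := by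
    calc J₁ * I ^ (n - 1) ≤ I * I ^ (n - 1) := mul_mono_left h₁
      _ = I ^ n := by rw [← pow_succ', Nat.sub_add_cancel hn]
  rw [sup_inf_eq_sup_mul_iff hJ₁ (h₂ n hn), ← Ideal.map_pow, ← Ideal.map_pow,
    map_mk_inf_eq_map_mk_mul_iff]

end Ideal

theorem sum_aluffi_torsion_free_iff_general {R : Type*} [CommRing R]
    (J₁ J₂ I : Ideal R) (h₁I : J₁ ≤ I)
    (h₂ : ∀ n : ℕ, 1 ≤ n → J₂ ⊓ I ^ n = J₂ * I ^ (n - 1)) :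
    (∀ n : ℕ, 1 ≤ n → (J₁ + J₂) ⊓ I ^ n = (J₁ + J₂) * I ^ (n - 1)) ↔
      (∀ n : ℕ, 1 ≤ n →
        (J₁.map (Ideal.Quotient.mk J₂)) ⊓ (I.map (Ideal.Quotient.mk J₂)) ^ n =
          (J₁.map (Ideal.Quotient.mk J₂)) * (I.map (Ideal.Quotient.mk J₂)) ^ (n - 1)) :=
  Ideal.isAluffiTorsionFree_sup_iff h₁I h₂

/-- Sum of two Aluffi torsion-free ideals is Aluffi torsion-free iff one of them
modulo the other is Aluffi torsion-free. -/
theorem sum_aluffi_torsion_free_iff {R : Type*} [CommRing R] [IsNoetherianRing R]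
    (J₁ J₂ I : Ideal R) (h₁I : J₁ ≤ I) (h₂I : J₂ ≤ I)
    (h₁ : ∀ n : ℕ, 1 ≤ n → J₁ ⊓ I ^ n = J₁ * I ^ (n - 1))
    (h₂ : ∀ n : ℕ, 1 ≤ n → J₂ ⊓ I ^ n = J₂ * I ^ (n - 1)) :
    (∀ n : ℕ, 1 ≤ n → (J₁ + J₂) ⊓ I ^ n = (J₁ + J₂) * I ^ (n - 1)) ↔
      (∀ n : ℕ, 1 ≤ n →
        (J₁.map (Ideal.Quotient.mk J₂)) ⊓ (I.map (Ideal.Quotient.mk J₂)) ^ n =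
          (J₁.map (Ideal.Quotient.mk J₂)) * (I.map (Ideal.Quotient.mk J₂)) ^ (n - 1)) :=
  sum_aluffi_torsion_free_iff_general J₁ J₂ I h₁I h₂
end

section
/- Let J₁, J₂ ⊆ I be ideals in a commutative Noetherian ring R, both Aluffi torsion-free in I, and suppose the image of J₁ modulo J₂ is Aluffi torsion-free with respect to the image of I in R/J₂. Then (J₁ + J₂) ∩ Iⁿ ⊆ (J₁ ∩ Iⁿ) + (J₂ ∩ Iⁿ) for all n ≥ 1. -/
/-!
Modulo `J₂`, an element of `(J₁ + J₂) ∩ Iⁿ` lies in `J̄₁ ∩ Īⁿ = J̄₁ Īⁿ⁻¹`, so it lies in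
`J₁ Iⁿ⁻¹ + J₂`. Since `J₁ Iⁿ⁻¹ ⊆ J₁ ∩ Iⁿ`, the modular law turns
`(J₁ Iⁿ⁻¹ + J₂) ∩ Iⁿ` into `J₁ Iⁿ⁻¹ + (J₂ ∩ Iⁿ)`, which is contained in `(J₁ ∩ Iⁿ) + (J₂ ∩ Iⁿ)`.
-/

namespace Ideal

variable {R : Type*} [CommRing R]

theorem mul_pow_pred_le_pow {J I : Ideal R} (hJI : J ≤ I) (n : ℕ) :
    J * I ^ (n - 1) ≤ I ^ n := by
  cases n with
  | zero => simp
  | succ n => simpa [pow_succ'] using mul_mono_left hJI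

theorem mul_pow_pred_le_inf_pow {J I : Ideal R} (hJI : J ≤ I) (n : ℕ) :
    J * I ^ (n - 1) ≤ J ⊓ I ^ n :=
  le_inf mul_le_left (mul_pow_pred_le_pow hJI n)

theorem sup_inf_pow_le_mul_pow_pred_sup {J K I : Ideal R} {n : ℕ}
    (hq : J.map (Quotient.mk K) ⊓ (I.map (Quotient.mk K)) ^ n ≤
      J.map (Quotient.mk K) * (I.map (Quotient.mk K)) ^ (n - 1)) :
    (J ⊔ K) ⊓ I ^ n ≤ J * I ^ (n - 1) ⊔ K := by
  refine (map_le_iff_le_comap.mp ?_).trans_eq (by rw [comap_map_quotientMk K, sup_comm])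
  calc ((J ⊔ K) ⊓ I ^ n).map (Quotient.mk K)
      ≤ J.map (Quotient.mk K) ⊓ (I.map (Quotient.mk K)) ^ n := by
        refine (map_inf_le _).trans (inf_le_inf ?_ (Ideal.map_pow _ I n).le)
        rw [map_sup, map_mk_eq_bot_of_le le_rfl, sup_bot_eq]
    _ ≤ J.map (Quotient.mk K) * (I.map (Quotient.mk K)) ^ (n - 1) := hq
    _ = (J * I ^ (n - 1)).map (Quotient.mk K) := by rw [Ideal.map_mul, Ideal.map_pow]

end Ideal

theorem sum_inter_pow_le_general {R : Type*} [CommRing R]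
    (J₁ J₂ I : Ideal R) (h₁I : J₁ ≤ I)
    (hq : ∀ n : ℕ, 1 ≤ n →
      (J₁.map (Ideal.Quotient.mk J₂)) ⊓ (I.map (Ideal.Quotient.mk J₂)) ^ n =
        (J₁.map (Ideal.Quotient.mk J₂)) * (I.map (Ideal.Quotient.mk J₂)) ^ (n - 1)) :
    ∀ n : ℕ, 1 ≤ n → (J₁ + J₂) ⊓ I ^ n ≤ (J₁ ⊓ I ^ n) + (J₂ ⊓ I ^ n) := by
  intro n hn
  calc (J₁ ⊔ J₂) ⊓ I ^ n ≤ (J₁ * I ^ (n - 1) ⊔ J₂) ⊓ I ^ n :=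
        le_inf (Ideal.sup_inf_pow_le_mul_pow_pred_sup (hq n hn).le) inf_le_right
    _ = J₁ * I ^ (n - 1) ⊔ J₂ ⊓ I ^ n :=
        sup_inf_assoc_of_le J₂ (Ideal.mul_pow_pred_le_pow h₁I n)
    _ ≤ J₁ ⊓ I ^ n ⊔ J₂ ⊓ I ^ n :=
        sup_le_sup_right (Ideal.mul_pow_pred_le_inf_pow h₁I n) _

/-- Key containment in the sum criterion: `(J₁ + J₂) ∩ Iⁿ ⊆ (J₁ ∩ Iⁿ) + (J₂ ∩ Iⁿ)`. -/
theorem sum_inter_pow_le {R : Type*} [CommRing R] [IsNoetherianRing R]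
    (J₁ J₂ I : Ideal R) (h₁I : J₁ ≤ I) (h₂I : J₂ ≤ I)
    (h₁ : ∀ n : ℕ, 1 ≤ n → J₁ ⊓ I ^ n = J₁ * I ^ (n - 1))
    (h₂ : ∀ n : ℕ, 1 ≤ n → J₂ ⊓ I ^ n = J₂ * I ^ (n - 1))
    (hq : ∀ n : ℕ, 1 ≤ n →
      (J₁.map (Ideal.Quotient.mk J₂)) ⊓ (I.map (Ideal.Quotient.mk J₂)) ^ n =
        (J₁.map (Ideal.Quotient.mk J₂)) * (I.map (Ideal.Quotient.mk J₂)) ^ (n - 1)) :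
    ∀ n : ℕ, 1 ≤ n → (J₁ + J₂) ⊓ I ^ n ≤ (J₁ ⊓ I ^ n) + (J₂ ⊓ I ^ n) :=
  sum_inter_pow_le_general J₁ J₂ I h₁I hq
end

section
/- Let R be a commutative local ring, J₁, J₂ ⊆ R ideals and I = J₁ + J₂. For every n ≥ 1, J₁ ∩ Iⁿ = J₁·Iⁿ⁻¹ + (J₁ ∩ J₂ⁿ). Consequently, J₁ ⊆ I is Aluffi torsion-free if and only if J₁ ∩ J₂ⁿ ⊆ J₁·Iⁿ⁻¹ for all n ≥ 1. -/
/-!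
Expanding `(J₁ + J₂)ⁿ` binomially, every term except `J₂ⁿ` has a factor `J₁`, so
`(J₁ + J₂)ⁿ = J₁·(J₁ + J₂)ⁿ⁻¹ + J₂ⁿ`. Since `J₁·(J₁ + J₂)ⁿ⁻¹ ⊆ J₁`, the modular law lets `J₁ ∩ -`
pass through this sum, giving `J₁ ∩ Iⁿ = J₁·Iⁿ⁻¹ + (J₁ ∩ J₂ⁿ)`. The Aluffi condition
`J₁ ∩ Iⁿ = J₁·Iⁿ⁻¹` then says exactly that the second summand is absorbed by the first.
-/

namespace Ideal

theorem sup_pow_succ {R : Type*} [CommSemiring R] (I J : Ideal R) (k : ℕ) :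
    (I ⊔ J) ^ (k + 1) = I * (I ⊔ J) ^ k ⊔ J ^ (k + 1) := by
  refine le_antisymm ?_ (sup_le ?_ (pow_le_pow_left' le_sup_right _))
  · induction k with
    | zero => simp
    | succ k ih =>
      have hJ : J * (I ⊔ J) ^ (k + 1) ≤ I * (I ⊔ J) ^ (k + 1) ⊔ J ^ (k + 2) :=
        calc J * (I ⊔ J) ^ (k + 1) ≤ J * (I * (I ⊔ J) ^ k ⊔ J ^ (k + 1)) := mul_mono_right ih
          _ = I * (J * (I ⊔ J) ^ k) ⊔ J ^ (k + 2) := by rw [mul_sup, mul_left_comm, ← pow_succ']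
          _ ≤ I * (I ⊔ J) ^ (k + 1) ⊔ J ^ (k + 2) := by
            rw [pow_succ' (I ⊔ J)]
            gcongr
            exact le_sup_right
      rw [pow_succ' (I ⊔ J) (k + 1), sup_mul]
      exact sup_le le_sup_left hJ
  · rw [pow_succ']
    exact mul_mono_left le_sup_left

theorem inf_sup_pow_succ {R : Type*} [CommRing R] (I J : Ideal R) (k : ℕ) :
    I ⊓ (I ⊔ J) ^ (k + 1) = I * (I ⊔ J) ^ k ⊔ I ⊓ J ^ (k + 1) := by
  rw [sup_pow_succ, inf_comm, sup_inf_assoc_of_le _ mul_le_left, inf_comm (J ^ _)]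

end Ideal

theorem local_sum_decomposition_general {R : Type*} [CommRing R]
    (J₁ J₂ : Ideal R) (I : Ideal R) (hI : I = J₁ + J₂) :
    (∀ n : ℕ, 1 ≤ n → J₁ ⊓ I ^ n = J₁ * I ^ (n - 1) + (J₁ ⊓ J₂ ^ n)) ∧
      ((∀ n : ℕ, 1 ≤ n → J₁ ⊓ I ^ n = J₁ * I ^ (n - 1)) ↔
        (∀ n : ℕ, 1 ≤ n → J₁ ⊓ J₂ ^ n ≤ J₁ * I ^ (n - 1))) := by
  subst hI
  have decomposition : ∀ n : ℕ, 1 ≤ n →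
      J₁ ⊓ (J₁ + J₂) ^ n = J₁ * (J₁ + J₂) ^ (n - 1) + (J₁ ⊓ J₂ ^ n) := by
    rintro n hn
    obtain ⟨k, rfl⟩ := Nat.exists_eq_add_of_le' hn
    exact Ideal.inf_sup_pow_succ J₁ J₂ k
  refine ⟨decomposition, forall₂_congr fun n hn => ?_⟩
  rw [decomposition n hn, Ideal.add_eq_sup, sup_eq_left]

/-- For a local ring and `I = J₁ + J₂`: `J₁ ∩ Iⁿ = J₁·Iⁿ⁻¹ + (J₁ ∩ J₂ⁿ)` for all `n ≥ 1`;
consequently `J₁ ⊆ I` is Aluffi torsion-free iff `J₁ ∩ J₂ⁿ ⊆ J₁·Iⁿ⁻¹` for all `n ≥ 1`. -/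
theorem local_sum_decomposition {R : Type*} [CommRing R] [IsLocalRing R]
    (J₁ J₂ : Ideal R) (I : Ideal R) (hI : I = J₁ + J₂) :
    (∀ n : ℕ, 1 ≤ n → J₁ ⊓ I ^ n = J₁ * I ^ (n - 1) + (J₁ ⊓ J₂ ^ n)) ∧
      ((∀ n : ℕ, 1 ≤ n → J₁ ⊓ I ^ n = J₁ * I ^ (n - 1)) ↔
        (∀ n : ℕ, 1 ≤ n → J₁ ⊓ J₂ ^ n ≤ J₁ * I ^ (n - 1))) :=
  local_sum_decomposition_general J₁ J₂ I hI
end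

section
/- Let (R, 𝔪) be a commutative Noetherian local ring, J₁ ⊆ R an ideal, J₂ ⊆ R an ideal, and I = J₁ + J₂. Suppose J₁ is generated by elements not in I². If Iⁿ ∩ J₁ ⊆ Iⁿ⁺¹ + J₁·Iⁿ⁻¹ for all n ≥ 1, then J₁ ∩ Iⁿ = J₁·Iⁿ⁻¹ for all n ≥ 1. -/
/-!
Feeding the hypothesis back into itself, the modular law gives
`J₁ ∩ Iⁿ ⊆ J₁ Iⁿ⁻¹ + Iⁿ⁺ᵐ` for every `m`. For `I ≠ R`, Krull's intersection theorem for the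
finite module `R ⧸ J₁ Iⁿ⁻¹` says that these ideals intersect to `J₁ Iⁿ⁻¹`.
-/

namespace Ideal

variable {R : Type*} [CommRing R]

theorem iInf_sup_pow_eq_of_isLocalRing [IsNoetherianRing R] [IsLocalRing R] (N : Ideal R)
    {I : Ideal R} (hI : I ≠ ⊤) : ⨅ m : ℕ, N ⊔ I ^ m = N := by
  have hcomap (m : ℕ) : N ⊔ I ^ m = (I ^ m • ⊤ : Submodule R (R ⧸ N)).comap N.mkQ := by
    rw [← Submodule.comap_map_mkQ, ← Submodule.range_mkQ N, ← Submodule.map_top,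
      ← Submodule.map_smul'', smul_eq_mul, mul_top]
  simp_rw [hcomap, ← Submodule.comap_iInf, iInf_pow_smul_eq_bot_of_isLocalRing _ hI,
    Submodule.comap_bot, Submodule.ker_mkQ]

theorem inf_pow_le_mul_pow_sup_pow {I J : Ideal R}
    (h : ∀ n : ℕ, 1 ≤ n → I ^ n ⊓ J ≤ I ^ (n + 1) + J * I ^ (n - 1)) {n : ℕ} (hn : 1 ≤ n) :
    ∀ m : ℕ, J ⊓ I ^ n ≤ J * I ^ (n - 1) ⊔ I ^ (n + m)
  | 0 => inf_le_right.trans le_sup_right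
  | m + 1 => calc
      J ⊓ I ^ n ≤ J ⊓ (J * I ^ (n - 1) ⊔ I ^ (n + m)) :=
        le_inf inf_le_left (inf_pow_le_mul_pow_sup_pow h hn m)
      _ = J * I ^ (n - 1) ⊔ I ^ (n + m) ⊓ J := by
        rw [inf_comm, sup_inf_assoc_of_le _ mul_le_left]
      _ ≤ J * I ^ (n - 1) ⊔ (I ^ (n + m + 1) ⊔ J * I ^ (n + m - 1)) :=
        sup_le_sup_left (h (n + m) (by omega)) _
      _ ≤ J * I ^ (n - 1) ⊔ I ^ (n + (m + 1)) :=
        sup_le le_sup_left <| sup_le le_sup_right <|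
          le_sup_of_le_left <| mul_mono_right <| pow_le_pow_right (by omega)

end Ideal

theorem aluffi_torsion_free_of_gr_quotient_general {R : Type*} [CommRing R] [IsNoetherianRing R]
    [IsLocalRing R] (J₁ J₂ : Ideal R) (I : Ideal R) (hI : I = J₁ + J₂)
    (h : ∀ n : ℕ, 1 ≤ n → I ^ n ⊓ J₁ ≤ I ^ (n + 1) + J₁ * I ^ (n - 1)) :
    ∀ n : ℕ, 1 ≤ n → J₁ ⊓ I ^ n = J₁ * I ^ (n - 1) := by
  intro n hn
  rcases eq_or_ne I ⊤ with hItop | hItop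
  · simp [hItop, Ideal.top_pow]
  have hJ₁I : J₁ ≤ I := hI ▸ le_sup_left
  refine le_antisymm ?_ (le_inf Ideal.mul_le_left ?_)
  · calc J₁ ⊓ I ^ n ≤ ⨅ m : ℕ, J₁ * I ^ (n - 1) ⊔ I ^ m :=
          le_iInf fun m => (Ideal.inf_pow_le_mul_pow_sup_pow h hn m).trans <|
            sup_le_sup_left (Ideal.pow_le_pow_right (by omega)) _
      _ = J₁ * I ^ (n - 1) := Ideal.iInf_sup_pow_eq_of_isLocalRing _ hItop
  · calc J₁ * I ^ (n - 1) ≤ I * I ^ (n - 1) := Ideal.mul_mono_left hJ₁I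
      _ = I ^ n := by rw [← pow_succ', Nat.sub_add_cancel hn]

/-- Implication (c) ⇒ (a): in a Noetherian local ring, if `J₁` is generated by
elements outside `I²` (where `I = J₁ + J₂`) and
`Iⁿ ∩ J₁ ⊆ Iⁿ⁺¹ + J₁·Iⁿ⁻¹` for all `n ≥ 1`, then `J₁ ⊆ I` is Aluffi torsion-free. -/
theorem aluffi_torsion_free_of_gr_quotient {R : Type*} [CommRing R] [IsNoetherianRing R]
    [IsLocalRing R] (J₁ J₂ : Ideal R) (I : Ideal R) (hI : I = J₁ + J₂)
    (hgen : ∃ S : Set R, J₁ = Ideal.span S ∧ ∀ s ∈ S, s ∉ I ^ 2)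
    (h : ∀ n : ℕ, 1 ≤ n → I ^ n ⊓ J₁ ≤ I ^ (n + 1) + J₁ * I ^ (n - 1)) :
    ∀ n : ℕ, 1 ≤ n → J₁ ⊓ I ^ n = J₁ * I ^ (n - 1) :=
  aluffi_torsion_free_of_gr_quotient_general J₁ J₂ I hI h
end

section
/- Let J₁ = (f₁,…,f_m), J₂ = (g₁,…,g_m) ⊆ I be ideals in a commutative ring R with fᵢ − gᵢ ∈ I² for all i, J₁ ⊆ I Aluffi torsion-free, and syzygy modules 𝒵₁, 𝒵₂ ⊆ Rᵐ. If (a₁,…,a_m) ∈ 𝒵₁ with aᵢ ∈ Iⁿ for all i, and J₂ ⊆ I is Aluffi torsion-free, then there exist bᵢ ∈ Iⁿ⁺¹ with (a₁−b₁,…,a_m−b_m) ∈ 𝒵₂. -/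
lemma span_mul_rep {R : Type*} [CommRing R] {m : ℕ} (g : Fin m → R) (K : Ideal R)
    (x : R) (hx : x ∈ Ideal.span (Set.range g) * K) :
    ∃ b : Fin m → R, (∀ i, b i ∈ K) ∧ ∑ i, b i * g i = x := by
  refine Submodule.mul_induction_on hx ?_ ?_
  · intro p hp q hq
    obtain ⟨c, hc⟩ := (Submodule.mem_span_range_iff_exists_fun R).mp hp
    refine ⟨fun i => c i * q, fun i => K.mul_mem_left _ hq, ?_⟩
    calc ∑ i, c i * q * g i = (∑ i, c i • g i) * q := by
          rw [Finset.sum_mul]; congr 1; ext i; simp [smul_eq_mul]; ring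
      _ = p * q := by rw [hc]
  · rintro x y ⟨b, hb, hbx⟩ ⟨c, hc, hcy⟩
    exact ⟨fun i => b i + c i, fun i => K.add_mem (hb i) (hc i), by
      simp [add_mul, Finset.sum_add_distrib, hbx, hcy]⟩

/-- Forward direction of the syzygy comparison: a syzygy of `f` with coefficients in `Iⁿ`
can be corrected by terms in `Iⁿ⁺¹` to a syzygy of `g`. -/
theorem syzygy_comparison_forward {R : Type*} [CommRing R] {m : ℕ} (f g : Fin m → R)
    (I : Ideal R) (J₁ J₂ : Ideal R)
    (hJ₁ : J₁ = Ideal.span (Set.range f)) (hJ₂ : J₂ = Ideal.span (Set.range g))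
    (h₁I : J₁ ≤ I) (h₂I : J₂ ≤ I)
    (hdiff : ∀ i, f i - g i ∈ I ^ 2)
    (hatf₁ : ∀ k : ℕ, 1 ≤ k → J₁ ⊓ I ^ k = J₁ * I ^ (k - 1))
    (hatf₂ : ∀ k : ℕ, 1 ≤ k → J₂ ⊓ I ^ k = J₂ * I ^ (k - 1))
    (n : ℕ) (a : Fin m → R) (ha : ∑ i, a i * f i = 0) (haI : ∀ i, a i ∈ I ^ n) :
    ∃ b : Fin m → R, (∀ i, b i ∈ I ^ (n + 1)) ∧ ∑ i, (a i - b i) * g i = 0 := by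
  have hgJ : ∀ i, g i ∈ J₂ := fun i => hJ₂ ▸ Ideal.subset_span ⟨i, rfl⟩
  have hsum : ∑ i, a i * g i ∈ J₂ ⊓ I ^ (n + 2) := by
    constructor
    · exact Ideal.sum_mem _ fun i _ => J₂.mul_mem_left _ (hgJ i)
    · have : ∑ i, a i * g i = ∑ i, a i * (g i - f i) := by
        rw [← sub_eq_zero, ← Finset.sum_sub_distrib]
        calc (∑ i, (a i * g i - a i * (g i - f i))) = ∑ i, a i * f i := by
              congr 1; ext i; ring
          _ = 0 := ha
      rw [this]
      refine Ideal.sum_mem _ fun i _ => ?_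
      have hmem : a i * (g i - f i) ∈ I ^ n * I ^ 2 :=
        Ideal.mul_mem_mul (haI i) (by simpa using (I ^ 2).neg_mem (hdiff i))
      have hle : I ^ n * I ^ 2 ≤ I ^ (n + 2) := by rw [← pow_add]
      exact hle hmem
  rw [hatf₂ (n + 2) (by omega)] at hsum
  have h21 : n + 2 - 1 = n + 1 := by omega
  rw [h21, hJ₂] at hsum
  obtain ⟨b, hbI, hbsum⟩ := span_mul_rep g (I ^ (n + 1)) _ hsum
  refine ⟨b, hbI, ?_⟩
  calc ∑ i, (a i - b i) * g i = (∑ i, a i * g i) - ∑ i, b i * g i := by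
        rw [← Finset.sum_sub_distrib]; congr 1; ext i; ring
    _ = 0 := by rw [hbsum, sub_self]
end

section
/- Let J₁ ⊆ J₂ ⊆ I be ideals in a commutative ring R such that J₁ ∩ J₂ⁿ⁻¹ = J₁·J₂ⁿ⁻¹ and Iⁿ ⊆ J₂ⁿ + J₁ for all n ≥ 1. Then Iⁿ ⊆ J₂ⁿ + Σ_{j=0}^{n−1} Iʲ·(I·J₂^{n−j−1} ∩ J₁) for all n ≥ 1. -/
/-!
Since `J₂ ≤ I`, the modular law turns `I·J₂ⁿ ≤ Iⁿ⁺¹ ≤ J₂ⁿ⁺¹ + J₁` into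
`I·J₂ⁿ ≤ J₂ⁿ⁺¹ + (I·J₂ⁿ ⊓ J₁)`. Multiplying the bound for `Iⁿ` by `I` and applying this to the
term `I·J₂ⁿ` gives the bound for `Iⁿ⁺¹`; the other terms just shift their power of `I` by one.
-/

namespace Ideal

variable {R : Type*} [CommRing R] {I J K : Ideal R}

theorem mul_pow_le_pow_succ_add_inf {n : ℕ} (hJI : J ≤ I) (hK : I ^ (n + 1) ≤ J ^ (n + 1) + K) :
    I * J ^ n ≤ J ^ (n + 1) + (I * J ^ n ⊓ K) := by
  have h_low : J ^ (n + 1) ≤ I * J ^ n := pow_succ' J n ▸ mul_mono_left hJI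
  have h_high : I * J ^ n ≤ J ^ (n + 1) + K :=
    (mul_mono_right (pow_right_mono hJI n)).trans (pow_succ' I n ▸ hK)
  calc I * J ^ n ≤ (J ^ (n + 1) ⊔ K) ⊓ (I * J ^ n) := le_inf h_high le_rfl
    _ = J ^ (n + 1) + (I * J ^ n ⊓ K) := by rw [sup_inf_assoc_of_le K h_low, inf_comm]; rfl

theorem mul_sum_add_inf_eq_sum_range_succ (I J K : Ideal R) (n : ℕ) :
    I * ∑ j ∈ Finset.range n, I ^ j * (I * J ^ (n - j - 1) ⊓ K) + (I * J ^ n ⊓ K) =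
      ∑ j ∈ Finset.range (n + 1), I ^ j * (I * J ^ (n + 1 - j - 1) ⊓ K) := by
  rw [Finset.sum_range_succ', Finset.mul_sum, pow_zero, one_mul, Nat.sub_zero, Nat.add_sub_cancel]
  congr 1
  refine Finset.sum_congr rfl fun j _ => ?_
  rw [← mul_assoc, ← pow_succ', show n + 1 - (j + 1) - 1 = n - j - 1 by omega]

theorem pow_le_pow_add_sum_mul_inf (hJI : J ≤ I) (hK : ∀ n : ℕ, I ^ (n + 1) ≤ J ^ (n + 1) + K)
    (n : ℕ) : I ^ n ≤ J ^ n + ∑ j ∈ Finset.range n, I ^ j * (I * J ^ (n - j - 1) ⊓ K) := by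
  induction n with
  | zero => simp
  | succ n ih =>
    calc I ^ (n + 1) = I * I ^ n := pow_succ' I n
      _ ≤ I * J ^ n + I * ∑ j ∈ Finset.range n, I ^ j * (I * J ^ (n - j - 1) ⊓ K) := by
        rw [← mul_add]; exact mul_mono_right ih
      _ ≤ J ^ (n + 1) + (I * J ^ n ⊓ K) +
          I * ∑ j ∈ Finset.range n, I ^ j * (I * J ^ (n - j - 1) ⊓ K) :=
        add_le_add_left (mul_pow_le_pow_succ_add_inf hJI (hK n)) _
      _ = J ^ (n + 1) + ∑ j ∈ Finset.range (n + 1), I ^ j * (I * J ^ (n + 1 - j - 1) ⊓ K) := by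
        rw [← mul_sum_add_inf_eq_sum_range_succ, add_assoc, add_comm (I * J ^ n ⊓ K)]

end Ideal

theorem pow_le_sum_decomposition_general {R : Type*} [CommRing R]
    (J₁ J₂ I : Ideal R) (h₂I : J₂ ≤ I)
    (h2 : ∀ n : ℕ, 1 ≤ n → I ^ n ≤ J₂ ^ n + J₁) :
    ∀ n : ℕ, 1 ≤ n →
      I ^ n ≤ J₂ ^ n + ∑ j ∈ Finset.range n, I ^ j * (I * J₂ ^ (n - j - 1) ⊓ J₁) :=
  fun n _ => Ideal.pow_le_pow_add_sum_mul_inf h₂I (fun m => h2 (m + 1) m.succ_pos) n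

/-- Inductive containment lemma: under the hypotheses,
`Iⁿ ⊆ J₂ⁿ + Σ_{j=0}^{n−1} Iʲ·(I·J₂^{n−j−1} ∩ J₁)` for all `n ≥ 1`. -/
theorem pow_le_sum_decomposition {R : Type*} [CommRing R]
    (J₁ J₂ I : Ideal R) (h₁₂ : J₁ ≤ J₂) (h₂I : J₂ ≤ I)
    (h1 : ∀ n : ℕ, 1 ≤ n → J₁ ⊓ J₂ ^ (n - 1) = J₁ * J₂ ^ (n - 1))
    (h2 : ∀ n : ℕ, 1 ≤ n → I ^ n ≤ J₂ ^ n + J₁) :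
    ∀ n : ℕ, 1 ≤ n →
      I ^ n ≤ J₂ ^ n + ∑ j ∈ Finset.range n, I ^ j * (I * J₂ ^ (n - j - 1) ⊓ J₁) :=
  pow_le_sum_decomposition_general J₁ J₂ I h₂I h2
end

section
/- Let J₁ ⊆ J₂ ⊆ I be ideals in a commutative ring R. Assume J₁ ∩ J₂ⁿ⁻¹ = J₁·J₂ⁿ⁻¹ and Iⁿ ⊆ J₂ⁿ + J₁ for all n ≥ 1. Then J₁ ∩ Iⁿ = J₁·Iⁿ⁻¹ for all n ≥ 1, i.e. J₁ ⊆ I is Aluffi torsion-free. -/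
/-!
Induct on `n`. Since `J₂ⁿ ⊆ Iⁿ`, the modular law turns `Iⁿ ⊆ J₂ⁿ + J₁` into
`Iⁿ ⊆ J₂ⁿ + (J₁ ∩ Iⁿ) = J₂ⁿ + J₁·Iⁿ⁻¹`, so `Iⁿ⁺¹ ⊆ J₂ⁿ + J₁·Iⁿ`. Intersecting with `J₁` and
using the modular law once more gives `J₁ ∩ Iⁿ⁺¹ ⊆ (J₁ ∩ J₂ⁿ) + J₁·Iⁿ = J₁·J₂ⁿ + J₁·Iⁿ = J₁·Iⁿ`.
-/

namespace Ideal

variable {R : Type*} [CommRing R] {J₁ J₂ I : Ideal R}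

theorem inf_pow_succ_succ_le_of_inf_pow_succ_eq (hJ₂I : J₂ ≤ I) {k : ℕ}
    (hinf : J₁ ⊓ J₂ ^ (k + 1) = J₁ * J₂ ^ (k + 1)) (hpow : I ^ (k + 1) ≤ J₂ ^ (k + 1) ⊔ J₁)
    (ih : J₁ ⊓ I ^ (k + 1) = J₁ * I ^ k) :
    J₁ ⊓ I ^ (k + 2) ≤ J₁ * I ^ (k + 1) := by
  have hJI : J₂ ^ (k + 1) ≤ I ^ (k + 1) := pow_right_mono hJ₂I _
  have hcover : I ^ (k + 1) ≤ J₂ ^ (k + 1) ⊔ J₁ * I ^ k := by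
    rw [← ih, ← sup_inf_assoc_of_le _ hJI]
    exact le_inf hpow le_rfl
  have hcover_succ : I ^ (k + 2) ≤ J₂ ^ (k + 1) ⊔ J₁ * I ^ (k + 1) :=
    calc I ^ (k + 2) = I ^ (k + 1) * I := pow_succ _ _
      _ ≤ (J₂ ^ (k + 1) ⊔ J₁ * I ^ k) * I := mul_mono_left hcover
      _ = J₂ ^ (k + 1) * I ⊔ J₁ * I ^ (k + 1) := by rw [sup_mul, mul_assoc, ← pow_succ]
      _ ≤ J₂ ^ (k + 1) ⊔ J₁ * I ^ (k + 1) := sup_le_sup_right mul_le_left _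
  calc J₁ ⊓ I ^ (k + 2) ≤ J₁ ⊓ (J₂ ^ (k + 1) ⊔ J₁ * I ^ (k + 1)) := inf_le_inf_left _ hcover_succ
    _ = J₁ ⊓ J₂ ^ (k + 1) ⊔ J₁ * I ^ (k + 1) := (inf_sup_assoc_of_le _ mul_le_left).symm
    _ = J₁ * J₂ ^ (k + 1) ⊔ J₁ * I ^ (k + 1) := by rw [hinf]
    _ = J₁ * I ^ (k + 1) := sup_eq_right.2 (mul_mono_right hJI)

theorem inf_pow_succ_eq_mul_pow (hJ₁I : J₁ ≤ I) (hJ₂I : J₂ ≤ I)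
    (hinf : ∀ k : ℕ, J₁ ⊓ J₂ ^ (k + 1) = J₁ * J₂ ^ (k + 1))
    (hpow : ∀ k : ℕ, I ^ (k + 1) ≤ J₂ ^ (k + 1) ⊔ J₁) (m : ℕ) :
    J₁ ⊓ I ^ (m + 1) = J₁ * I ^ m := by
  induction m with
  | zero => simpa using hJ₁I
  | succ k ih =>
    refine le_antisymm (inf_pow_succ_succ_le_of_inf_pow_succ_eq hJ₂I (hinf k) (hpow k) ih) ?_
    refine le_inf mul_le_left ?_
    rw [pow_succ' I (k + 1)]
    exact mul_mono_left hJ₁I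

end Ideal

/-- If `J₁ ∩ J₂ⁿ⁻¹ = J₁·J₂ⁿ⁻¹` and `Iⁿ ⊆ J₂ⁿ + J₁` for all `n ≥ 1`, then
`J₁ ⊆ I` is Aluffi torsion-free. -/
theorem aluffi_torsion_free_of_inter_and_pow {R : Type*} [CommRing R]
    (J₁ J₂ I : Ideal R) (h₁₂ : J₁ ≤ J₂) (h₂I : J₂ ≤ I)
    (h1 : ∀ n : ℕ, 1 ≤ n → J₁ ⊓ J₂ ^ (n - 1) = J₁ * J₂ ^ (n - 1))
    (h2 : ∀ n : ℕ, 1 ≤ n → I ^ n ≤ J₂ ^ n + J₁) :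
    ∀ n : ℕ, 1 ≤ n → J₁ ⊓ I ^ n = J₁ * I ^ (n - 1) := by
  intro n hn
  obtain ⟨m, rfl⟩ := Nat.exists_eq_add_of_le' hn
  simpa using Ideal.inf_pow_succ_eq_mul_pow (h₁₂.trans h₂I) h₂I
    (fun k => by simpa using h1 (k + 2) (by omega)) (fun k => h2 (k + 1) (by omega)) m
end

section
/- Let J = (f₁,…,f_t) ⊆ I be ideals in a commutative ring R with J ∩ Iⁿ = J·Iⁿ⁻¹ for all n ≥ 1, and set J_{t−1} = (f₁,…,f_{t−1}). Then for all n ≥ 1, J_{t−1} ∩ Iⁿ ⊆ J_{t−1}·Iⁿ⁻¹ + f_t·((J_{t−1} : f_t) ∩ Iⁿ⁻¹). -/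
/-!
Since `J_{t-1} ≤ J`, an element `x ∈ J_{t-1} ∩ Iⁿ` lies in `J ∩ Iⁿ = J·Iⁿ⁻¹ = J_{t-1}·Iⁿ⁻¹ + f_t·Iⁿ⁻¹`,
so `x = a + f_t c` with `a ∈ J_{t-1}·Iⁿ⁻¹` and `c ∈ Iⁿ⁻¹`. Then `f_t c = x - a ∈ J_{t-1}`, that is,
`c ∈ (J_{t-1} : f_t)`.
-/

theorem Set.range_eq_insert_image_of_insert_eq_univ {α β : Type*} (f : α → β) {s : Set α} {a : α}
    (h : insert a s = Set.univ) : Set.range f = insert (f a) (f '' s) := by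
  rw [← Set.image_univ, ← h, Set.image_insert_eq]

theorem Fin.insert_last_setOf_lt_eq_univ {t : ℕ} (ht : 1 ≤ t) :
    insert (⟨t - 1, Nat.sub_lt ht Nat.one_pos⟩ : Fin t) {i : Fin t | (i : ℕ) < t - 1} = Set.univ := by
  ext i
  simp only [Set.mem_insert_iff, Set.mem_ofPred_eq, Set.mem_univ, iff_true, Fin.ext_iff]
  omega

theorem Ideal.inf_sup_span_singleton_mul_le {R : Type*} [CommRing R] (K Q : Ideal R) (g : R) :
    K ⊓ (K ⊔ Ideal.span {g}) * Q ≤ K * Q + Ideal.span {g} * (K.colon (Ideal.span {g}) ⊓ Q) := by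
  rintro x ⟨hxK, hx⟩
  rw [Ideal.sup_mul] at hx
  obtain ⟨a, ha, b, hb, rfl⟩ := Submodule.mem_sup.mp hx
  obtain ⟨c, hc, rfl⟩ := Ideal.mem_span_singleton_mul.mp hb
  have hgc : g * c ∈ K := by
    rw [← add_sub_cancel_left a (g * c)]
    exact K.sub_mem hxK (Ideal.mul_le_left ha)
  have hcol : c ∈ K.colon (Ideal.span {g}) := by
    rw [Ideal.mem_colon_span_singleton, mul_comm]
    exact hgc
  exact Submodule.add_mem_sup ha (Ideal.mem_span_singleton_mul.mpr ⟨c, ⟨hcol, hc⟩, rfl⟩)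

/-- Key containment: `J_{t−1} ∩ Iⁿ ⊆ J_{t−1}·Iⁿ⁻¹ + f_t·((J_{t−1} : f_t) ∩ Iⁿ⁻¹)`. -/
theorem truncation_inter_pow_le {R : Type*} [CommRing R] {t : ℕ} (ht : 1 ≤ t)
    (f : Fin t → R) (J I : Ideal R) (hJ : J = Ideal.span (Set.range f))
    (hatf : ∀ n : ℕ, 1 ≤ n → J ⊓ I ^ n = J * I ^ (n - 1))
    (Jt1 : Ideal R) (hJt1 : Jt1 = Ideal.span (f '' {i : Fin t | (i : ℕ) < t - 1})) :
    ∀ n : ℕ, 1 ≤ n →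
      Jt1 ⊓ I ^ n ≤
        Jt1 * I ^ (n - 1) +
          Ideal.span {f ⟨t - 1, by omega⟩} *
            (Submodule.colon Jt1 (Ideal.span {f ⟨t - 1, by omega⟩}) ⊓ I ^ (n - 1)) := by
  intro n hn
  have hsplit : J = Jt1 ⊔ Ideal.span {f ⟨t - 1, by omega⟩} := by
    rw [hJ, hJt1,
      Set.range_eq_insert_image_of_insert_eq_univ f (Fin.insert_last_setOf_lt_eq_univ ht),
      Ideal.span_insert, sup_comm]
  calc Jt1 ⊓ I ^ n ≤ Jt1 ⊓ (J ⊓ I ^ n) :=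
        le_inf inf_le_left (inf_le_inf_right _ (hsplit ▸ le_sup_left))
    _ = Jt1 ⊓ (Jt1 ⊔ Ideal.span {f ⟨t - 1, by omega⟩}) * I ^ (n - 1) := by rw [hatf n hn, hsplit]
    _ ≤ _ := Ideal.inf_sup_span_singleton_mul_le _ _ _
end

section
/- In the polynomial ring R = k[x,y,z] over a field k, let J₁ = (xy) and J₂ = (yz), and I = (x,y,z)². Then J₁ ⊆ I and J₂ ⊆ I are both Aluffi torsion-free, but J₁ ∩ J₂ = (xyz) ⊆ I is not Aluffi torsion-free; specifically (xyz) ∩ I² ≠ (xyz)·I. -/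
/-!
Write `𝔪 = (x, y, z)`. Its powers are monomial ideals: `𝔪ⁿ` consists of the polynomials all of
whose monomials have degree `≥ n`. Multiplication by a monomial `u` of degree `d` shifts every
exponent vector by that of `u`, so `(u) ∩ 𝔪ⁿ = u·𝔪ⁿ⁻ᵈ`. For the quadratic monomials `xy` and `yz` this reads
`(u) ∩ Iⁿ = u·𝔪²ⁿ⁻² = (u)·Iⁿ⁻¹`. For the cubic `xyz = lcm(xy, yz)`, however, `(xyz) ∩ I² = xyz·𝔪`
contains `x²yz` of degree `4`, while `(xyz)·I` lives in degrees `≥ 5`.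
-/

open MvPolynomial

open Finsupp

def Ideal.IsAluffiTorsionFree_s16 {A : Type*} [CommSemiring A] (J I : Ideal A) : Prop :=
  ∀ n : ℕ, 1 ≤ n → J ⊓ I ^ n = J * I ^ (n - 1)

namespace MvPolynomial

variable {σ R : Type*} [CommSemiring R]

theorem X_mul_X_eq_monomial (i j : σ) :
    (X i * X j : MvPolynomial σ R) = monomial (single i 1 + single j 1) 1 := by
  simp only [X, monomial_mul, mul_one]

theorem idealOfVars_fin_three : idealOfVars (Fin 3) R = Ideal.span {X 0, X 1, X 2} := by
  rw [idealOfVars]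
  congr 1
  ext
  simp [Fin.exists_fin_succ, eq_comm]

section SpanMonomial

variable {s : σ →₀ ℕ}

theorem mem_span_monomial_one_iff {p : MvPolynomial σ R} :
    p ∈ Ideal.span {monomial s (1 : R)} ↔ ∀ x ∈ p.support, s ≤ x := by
  rw [← Set.image_singleton (f := (monomial · (1 : R))), mem_ideal_span_monomial_image]
  simp

theorem span_monomial_one_inf_span_monomial_one (t : σ →₀ ℕ) :
    Ideal.span {monomial s (1 : R)} ⊓ Ideal.span {monomial t 1} =
      Ideal.span {monomial (s ⊔ t) 1} := by
  ext p
  simp only [Submodule.mem_inf, mem_span_monomial_one_iff, sup_le_iff, ← forall₂_and]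

theorem monomial_one_mul_mem_pow_idealOfVars_iff {p : MvPolynomial σ R} {n : ℕ} :
    monomial s 1 * p ∈ idealOfVars σ R ^ n ↔ p ∈ idealOfVars σ R ^ (n - degree s) := by
  simp only [mem_pow_idealOfVars_iff']
  constructor
  · intro h x hx
    simpa [coeff_monomial_mul] using h (s + x) (by rw [map_add]; omega)
  · intro h x hx
    rw [coeff_monomial_mul']
    split_ifs with hsx
    · obtain ⟨y, rfl⟩ := exists_add_of_le hsx
      rw [map_add] at hx
      simp [h y (by omega)]
    · rfl

theorem span_monomial_one_inf_pow_idealOfVars (n : ℕ) :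
    Ideal.span {monomial s (1 : R)} ⊓ idealOfVars σ R ^ n =
      Ideal.span {monomial s 1} * idealOfVars σ R ^ (n - degree s) := by
  ext f
  simp only [Submodule.mem_inf, Ideal.mem_span_singleton', Ideal.mem_span_singleton_mul]
  constructor
  · rintro ⟨⟨g, rfl⟩, hg⟩
    rw [mul_comm] at hg
    exact ⟨g, monomial_one_mul_mem_pow_idealOfVars_iff.mp hg, mul_comm _ _⟩
  · rintro ⟨g, hg, rfl⟩
    exact ⟨⟨g, mul_comm _ _⟩, monomial_one_mul_mem_pow_idealOfVars_iff.mpr hg⟩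

theorem span_monomial_one_mul_pow_idealOfVars_le (n : ℕ) :
    Ideal.span {monomial s (1 : R)} * idealOfVars σ R ^ n ≤
      idealOfVars σ R ^ (degree s + n) := by
  rw [← Nat.add_sub_cancel_left (n := degree s) (m := n), ← span_monomial_one_inf_pow_idealOfVars,
    Nat.add_sub_cancel_left]
  exact inf_le_right

theorem span_monomial_one_mul_pow_idealOfVars_ne_succ [Nontrivial R] (i : σ) (n : ℕ) :
    Ideal.span {monomial s (1 : R)} * idealOfVars σ R ^ n ≠
      Ideal.span {monomial s 1} * idealOfVars σ R ^ (n + 1) := by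
  intro h
  have hmem : monomial s (1 : R) * X i ^ n ∈ Ideal.span {monomial s 1} * idealOfVars σ R ^ n :=
    Ideal.mul_mem_mul (Ideal.mem_span_singleton_self _)
      (Ideal.pow_mem_pow (Ideal.subset_span (Set.mem_range_self i)) n)
  have hdeg := span_monomial_one_mul_pow_idealOfVars_le (n + 1) (h ▸ hmem)
  rw [X_pow_eq_monomial, monomial_mul, mul_one, monomial_mem_pow_idealOfVars_iff _ _ one_ne_zero,
    map_add, degree_single] at hdeg
  omega

theorem isAluffiTorsionFree_span_monomial_one (s : σ →₀ ℕ) :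
    (Ideal.span {monomial s (1 : R)}).IsAluffiTorsionFree_s16 (idealOfVars σ R ^ degree s) := by
  intro n _
  rw [← pow_mul, ← pow_mul, span_monomial_one_inf_pow_idealOfVars, Nat.mul_sub_one]

end SpanMonomial

theorem isAluffiTorsionFree_span_X_mul_X (i j : σ) :
    (Ideal.span {X i * X j}).IsAluffiTorsionFree_s16 (idealOfVars σ R ^ 2) := by
  have h := isAluffiTorsionFree_span_monomial_one (R := R) (single i 1 + single j 1)
  rwa [map_add, degree_single, degree_single, ← X_mul_X_eq_monomial] at h

end MvPolynomial

/-- In `k[x,y,z]` with `I = (x,y,z)²`: `(xy) ⊆ I` and `(yz) ⊆ I` are Aluffi torsion-free,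
`(xy) ∩ (yz) = (xyz)`, but `(xyz) ⊆ I` is not Aluffi torsion-free:
`(xyz) ∩ I² ≠ (xyz)·I`. -/
theorem intersection_not_aluffi_torsion_free (k : Type*) [Field k] :
    let R := MvPolynomial (Fin 3) k
    let x : R := X 0
    let y : R := X 1
    let z : R := X 2
    let I : Ideal R := (Ideal.span {x, y, z}) ^ 2
    let J₁ : Ideal R := Ideal.span {x * y}
    let J₂ : Ideal R := Ideal.span {y * z}
    (∀ n : ℕ, 1 ≤ n → J₁ ⊓ I ^ n = J₁ * I ^ (n - 1)) ∧
    (∀ n : ℕ, 1 ≤ n → J₂ ⊓ I ^ n = J₂ * I ^ (n - 1)) ∧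
    J₁ ⊓ J₂ = Ideal.span {x * y * z} ∧
    Ideal.span {x * y * z} ⊓ I ^ 2 ≠ Ideal.span {x * y * z} * I := by
  dsimp only
  rw [← idealOfVars_fin_three]
  have hxyz : (X 0 * X 1 * X 2 : MvPolynomial (Fin 3) k) =
      monomial (single 0 1 + single 1 1 + single 2 1) 1 := by
    simp only [X, monomial_mul, mul_one]
  have hlcm : (single 0 1 + single 1 1 : Fin 3 →₀ ℕ) ⊔ (single 1 1 + single 2 1) =
      single 0 1 + single 1 1 + single 2 1 := by
    ext i
    fin_cases i <;> simp
  have hdeg : degree (single 0 1 + single 1 1 + single 2 1 : Fin 3 →₀ ℕ) = 3 := by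
    simp only [map_add, degree_single]
  refine ⟨isAluffiTorsionFree_span_X_mul_X 0 1, isAluffiTorsionFree_span_X_mul_X 1 2, ?_, ?_⟩
  · rw [hxyz, X_mul_X_eq_monomial, X_mul_X_eq_monomial, span_monomial_one_inf_span_monomial_one,
      hlcm]
  · rw [hxyz, ← pow_mul, span_monomial_one_inf_pow_idealOfVars, hdeg]
    exact span_monomial_one_mul_pow_idealOfVars_ne_succ 0 1
end
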